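/- arXiv:1512.04041 — 2 statements merged into one kernel-verified Lean document; each statement's English description precedes it below -/
import Mathlib

section
/- Let α, β be quadratic elements of the algebraic closure of F_q(T), with minimal polynomials P_α(X) = A(X−α)(X−α') and P_β(X) = B(X−β)(X−β'). If α ≠ α' and P_α(X) ≠ P_β(X), then |α − β| ≥ max(1, |α − α'|^{−1}) · H(α)^{−2} · H(β)^{−2}. -/
open Polynomial Filter
open scoped ENNReal

noncomputable section

namespace Ooto

variable (Fq : Type) [Field Fq] [Fintype Fq]

/-- `F_q((T⁻¹))`, realized as formal Laurent series in the variable `X = T⁻¹`. -/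
abbrev K := LaurentSeries Fq

/-- The element `T = X⁻¹` of `F_q((T⁻¹))`. -/
def TT : K Fq := HahnSeries.single (-1 : ℤ) (1 : Fq)

/-- The natural embedding of `F_q[T]` into `F_q((T⁻¹))`, sending `T` to `T`. -/
def polyToK : Polynomial Fq →+* K Fq := Polynomial.eval₂RingHom HahnSeries.C (TT Fq)

open Classical in
/-- The absolute value on `F_q((T⁻¹))`: `|0| = 0` and `|ξ| = q^{-N}` where `N` is the order
of `ξ` as a series in `T⁻¹`. -/
def kabs (f : K Fq) : ℝ := if f = 0 then 0 else (Fintype.card Fq : ℝ) ^ (-f.order)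

/-- A fixed algebraic closure of `F_q((T⁻¹))`. -/
abbrev L := AlgebraicClosure (K Fq)

def toL : K Fq →+* L Fq := algebraMap (K Fq) (L Fq)

def φ : Polynomial Fq →+* L Fq := (toL Fq).comp (polyToK Fq)

/-- Evaluation of `P ∈ (F_q[T])[X]` at `ξ ∈ F_q((T⁻¹))`. -/
def evalK (P : Polynomial (Polynomial Fq)) (ξ : K Fq) : K Fq :=
  Polynomial.eval₂ (polyToK Fq) ξ P

/-- Evaluation of `P ∈ (F_q[T])[X]` at a point of the algebraic closure. -/
def evalL (P : Polynomial (Polynomial Fq)) (α : L Fq) : L Fq :=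
  Polynomial.eval₂ (φ Fq) α P

/-- Height of a polynomial over `F_q[T]`: the maximum of the absolute values of its
coefficients. -/
def Hpoly (P : Polynomial (Polynomial Fq)) : ℝ := ⨆ i : ℕ, kabs Fq (polyToK Fq (P.coeff i))

/-- `P` is the minimal polynomial of `α`: a non-constant irreducible primitive polynomial in
`(F_q[T])[X]` whose leading coefficient is monic in `T`, vanishing at `α`. -/
def IsMinPolyOf (P : Polynomial (Polynomial Fq)) (α : L Fq) : Prop :=
  0 < P.natDegree ∧ Irreducible P ∧ P.IsPrimitive ∧ (P.leadingCoeff).Monic ∧ evalL Fq P α = 0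

/-- `α` is algebraic over `F_q(T)`. -/
def IsAlgElem (α : L Fq) : Prop := ∃ P, IsMinPolyOf Fq P α

open Classical in
/-- The minimal polynomial of an algebraic element (junk value `0` otherwise). -/
def minPolyPrim (α : L Fq) : Polynomial (Polynomial Fq) :=
  if h : IsAlgElem Fq α then h.choose else 0

/-- Degree of an algebraic element. -/
def degAlg (α : L Fq) : ℕ := (minPolyPrim Fq α).natDegree

/-- Height of an algebraic element. -/
def heightAlg (α : L Fq) : ℝ := Hpoly Fq (minPolyPrim Fq α)

/-- Inseparable degree of a polynomial `P ∈ (F_q[T])[X]`: the largest power `f = p^j` of the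
characteristic such that `P(X) = R(X^f)` for some `R`. -/
def insepDeg (P : Polynomial (Polynomial Fq)) : ℕ :=
  (ringChar Fq) ^ sSup {j : ℕ | ∃ R : Polynomial (Polynomial Fq),
    P = R.comp (Polynomial.X ^ (ringChar Fq) ^ j)}

/-- Inseparable degree of an algebraic element. -/
def insepAlg (α : L Fq) : ℕ := insepDeg Fq (minPolyPrim Fq α)

/-- `α'` is the Galois conjugate of the quadratic element `α` (equal to `α` itself in the
inseparable case): the minimal polynomial of `α` factors as `A(X - α)(X - α')`. -/
def IsConjOf (α' α : L Fq) : Prop :=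
  (minPolyPrim Fq α).natDegree = 2 ∧
  (minPolyPrim Fq α).map (φ Fq) =
    Polynomial.C (φ Fq (minPolyPrim Fq α).leadingCoeff) *
      (Polynomial.X - Polynomial.C α) * (Polynomial.X - Polynomial.C α')

/-- `v` is an absolute value on the algebraic closure of `F_q((T⁻¹))` extending `kabs`
(such an extension exists and is unique). -/
structure IsAbsExt (v : L Fq → ℝ) : Prop where
  eq_zero_iff : ∀ x, v x = 0 ↔ x = 0
  map_mul : ∀ x y, v (x * y) = v x * v y
  add_le : ∀ x y, v (x + y) ≤ max (v x) (v y)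
  nonneg : ∀ x, 0 ≤ v x
  extends_kabs : ∀ f : K Fq, v (toL Fq f) = kabs Fq f

/-- The exponent `w_n(ξ)`: the supremum of the real numbers `w` such that
`0 < |P(ξ)| ≤ H(P)^{-w}` for infinitely many `P ∈ (F_q[T])[X]` of degree at most `n`. -/
def wExp (n : ℕ) (ξ : K Fq) : EReal :=
  sSup {x : EReal | ∃ w : ℝ, x = (w : EReal) ∧
    {P : Polynomial (Polynomial Fq) | P.natDegree ≤ n ∧ 0 < kabs Fq (evalK Fq P ξ) ∧
      kabs Fq (evalK Fq P ξ) ≤ Hpoly Fq P ^ (-w)}.Infinite}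

/-- The exponent `w_n^*(ξ)`: the supremum of the real numbers `w` such that
`0 < |ξ - α| ≤ H(α)^{-w-1}` for infinitely many algebraic `α` of degree at most `n`. -/
def wStarExp (v : L Fq → ℝ) (n : ℕ) (ξ : K Fq) : EReal :=
  sSup {x : EReal | ∃ w : ℝ, x = (w : EReal) ∧
    {α : L Fq | IsAlgElem Fq α ∧ degAlg Fq α ≤ n ∧ 0 < v (toL Fq ξ - α) ∧
      v (toL Fq ξ - α) ≤ heightAlg Fq α ^ (-w - 1)}.Infinite}

/-- `pSeq a n = p_{n-1}`, the numerators of the convergents of `[a 0; a 1, a 2, …]`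
(with `p_{-1} = 1`). -/
def pSeq (a : ℕ → Polynomial Fq) : ℕ → Polynomial Fq
  | 0 => 1
  | 1 => a 0
  | (n+2) => a (n+1) * pSeq a (n+1) + pSeq a n

/-- `qSeq a n = q_{n-1}`, the denominators of the convergents of `[a 0; a 1, a 2, …]`
(with `q_{-1} = 0`). -/
def qSeq (a : ℕ → Polynomial Fq) : ℕ → Polynomial Fq
  | 0 => 0
  | 1 => 1
  | (n+2) => a (n+1) * qSeq a (n+1) + qSeq a n

/-- `ξ` has continued fraction expansion `[a 0; a 1, a 2, …]`: each partial quotient `a n`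
(`n ≥ 1`) has degree at least one and `|ξ - p_n/q_n| = |q_n|⁻¹|q_{n+1}|⁻¹` for all `n ≥ 0`. -/
def IsCFOf (ξ : K Fq) (a : ℕ → Polynomial Fq) : Prop :=
  (∀ n, 1 ≤ n → 1 ≤ (a n).natDegree) ∧
  ∀ n : ℕ,
    kabs Fq (ξ - polyToK Fq (pSeq Fq a (n+1)) / polyToK Fq (qSeq Fq a (n+1))) =
      (kabs Fq (polyToK Fq (qSeq Fq a (n+1))) * kabs Fq (polyToK Fq (qSeq Fq a (n+2))))⁻¹

/-- The sequence of partial quotients of `[0; b 0, b 1, b 2, …]`. -/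
def cfA (b : ℕ → Polynomial Fq) : ℕ → Polynomial Fq := fun n => if n = 0 then 0 else b (n - 1)

/-- `qden b n` is the denominator `q_n` of the `n`-th convergent of `[0; b 0, b 1, …]`. -/
def qden (b : ℕ → Polynomial Fq) (n : ℕ) : Polynomial Fq := qSeq Fq (cfA Fq b) (n + 1)

/-- `V^w` for a finite word `V` and a real `w ≥ 0`: `⌊w⌋` copies of `V` followed by the prefix
of `V` of length `⌈(w - ⌊w⌋)|V|⌉`. -/
def wordPow {A : Type*} (V : List A) (w : ℝ) : List A :=
  (List.replicate ⌊w⌋₊ V).flatten ++ V.take ⌈(w - ⌊w⌋₊) * V.length⌉₊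

/-- The finite word `l` is a prefix of the infinite word `b`. -/
def IsPrefixOfSeq {A : Type*} (l : List A) (b : ℕ → A) : Prop :=
  ∀ (i : ℕ) (h : i < l.length), l.get ⟨i, h⟩ = b i

/-- Condition `(*)_ρ` for an infinite word. -/
def SatisfiesCond {A : Type*} (b : ℕ → A) (ρ : ℝ) : Prop :=
  ∃ (U V : ℕ → List A) (w : ℕ → ℝ),
    (∀ n, V n ≠ []) ∧ (∀ n, 0 ≤ w n) ∧
    (∀ n, IsPrefixOfSeq (U n ++ wordPow (V n) (w n)) b) ∧
    (∀ n, ρ * (((U n).length + (V n).length : ℕ) : ℝ) ≤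
      (((U n).length + (wordPow (V n) (w n)).length : ℕ) : ℝ)) ∧
    StrictMono fun n => (wordPow (V n) (w n)).length

/-- The Diophantine exponent of an infinite word: the supremum of the `ρ` such that the word
satisfies Condition `(*)_ρ`. -/
def dioExp {A : Type*} (b : ℕ → A) : EReal :=
  sSup {x : EReal | ∃ ρ : ℝ, x = (ρ : EReal) ∧ SatisfiesCond b ρ}

/-- The complexity function: the number of distinct blocks of `n` consecutive letters. -/
def complexity {A : Type*} (b : ℕ → A) (n : ℕ) : ℕ∞ :=
  {w : Fin n → A | ∃ i : ℕ, ∀ k : Fin n, w k = b (i + k)}.encard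

/-- The infinite word `b` is ultimately periodic. -/
def UltimatelyPeriodic {A : Type*} (b : ℕ → A) : Prop :=
  ∃ N T : ℕ, 0 < T ∧ ∀ n, N ≤ n → b (n + T) = b n

end Ooto

/-!
The resultant of `P_α` and `P_β` lies in `F_q[T]` and equals
`A²B²(α - β)(α - β')(α' - β)(α' - β')`; it is nonzero because distinct minimal polynomials have no
common root, so its absolute value is at least `1`. Likewise the discriminant `A²(α - α')²` gives
`|A||α - α'| ≥ 1`. By Gauss's lemma for the nonarchimedean absolute value,
`H(α) = |A| max(1, |α|) max(1, |α'|)`, while `|x - y| ≤ max(1, |x|) max(1, |y|)`. Bounding the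
three factors other than `|α - β|` in this way gives `|α - β| ≥ H(α)⁻²H(β)⁻²`; bounding `|α' - β|`
instead by `max(|α - α'|, |α - β|)` and using the discriminant gains the factor `|α - α'|⁻¹`.
-/

namespace Polynomial

lemma gaussNorm_X_sub_C {R : Type*} [Ring R] [Nontrivial R] (abv : AbsoluteValue R ℝ) (x : R) :
    (X - C x).gaussNorm abv 1 = max 1 (abv x) := by
  refine le_antisymm ?_ (max_le ?_ ?_)
  · obtain ⟨i, hi⟩ := (X - C x).exists_eq_gaussNorm abv 1
    rw [hi, one_pow, mul_one, coeff_sub, coeff_X, coeff_C]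
    rcases i with _ | _ | i <;> simp
  · have h := (X - C x).le_gaussNorm abv zero_le_one 1
    rwa [coeff_sub, coeff_X_one, coeff_C_succ, sub_zero, map_one, one_pow, one_mul] at h
  · have h := (X - C x).le_gaussNorm abv zero_le_one 0
    rwa [coeff_sub, coeff_X_zero, coeff_C_zero, zero_sub, abv.map_neg, pow_zero, mul_one] at h

lemma gaussNorm_C_mul_X_sub_C_mul_X_sub_C {R : Type*} [Ring R] [Nontrivial R]
    {abv : AbsoluteValue R ℝ} (hna : IsNonarchimedean abv) (a x y : R) :
    (C a * (X - C x) * (X - C y)).gaussNorm abv 1 = abv a * (max 1 (abv x) * max 1 (abv y)) := by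
  rw [gaussNorm_mul hna one_pos, gaussNorm_mul hna one_pos, gaussNorm_C, gaussNorm_X_sub_C,
    gaussNorm_X_sub_C, mul_assoc]

lemma resultant_C_mul_X_sub_C_mul_X_sub_C {R : Type*} [CommRing R] [Nontrivial R] (a x y : R)
    {g : R[X]} {n : ℕ} (hg : g.natDegree ≤ n) :
    resultant (C a * (X - C x) * (X - C y)) g 2 n = a ^ n * (g.eval x * g.eval y) := by
  rw [mul_assoc, resultant_C_mul_left, show 2 = (X - C x).natDegree + (X - C y).natDegree by simp,
    resultant_mul_left _ _ _ _ hg, natDegree_X_sub_C, natDegree_X_sub_C,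
    resultant_X_sub_C_left _ _ _ hg, resultant_X_sub_C_left _ _ _ hg]

lemma discr_map_of_degree_eq_two {R S : Type*} [CommRing R] [CommRing S] (f : R[X]) (φ : R →+* S)
    (hf : f.degree = 2) (hfφ : (f.map φ).degree = 2) : discr (f.map φ) = φ (discr f) := by
  simp [discr_of_degree_eq_two hf, discr_of_degree_eq_two hfφ, coeff_map, map_ofNat]

lemma discr_C_mul_X_sub_C_mul_X_sub_C {R : Type*} [CommRing R] [IsDomain R] {a : R} (ha : a ≠ 0)
    (x y : R) : discr (C a * (X - C x) * (X - C y)) = (a * (x - y)) ^ 2 := by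
  have hdeg : (C a * (X - C x) * (X - C y)).degree = 2 := by
    rw [degree_mul, degree_mul, degree_C ha, degree_X_sub_C, degree_X_sub_C]; rfl
  rw [discr_of_degree_eq_two hdeg]
  simp only [mul_assoc, coeff_C_mul]
  simp [sub_mul, mul_sub, coeff_X, coeff_C]
  ring

end Polynomial

lemma max_one_inv_mul_inv_le {e t H : ℝ} (ht : 0 < t) (hH : 0 < H) (h₁ : 1 ≤ e * H)
    (h₂ : 1 ≤ e * t * H) : max 1 t⁻¹ * H⁻¹ ≤ e := by
  rcases le_total t⁻¹ 1 with h | h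
  · rw [max_eq_left h, one_mul, inv_le_iff_one_le_mul₀ hH]
    linarith
  · rw [max_eq_right h, ← mul_inv, inv_le_iff_one_le_mul₀ (by positivity)]
    linarith

namespace IsNonarchimedean

variable {L : Type*} [Field L] {abv : AbsoluteValue L ℝ} (hna : IsNonarchimedean abv)
include hna

lemma abv_sub_le_max_one_mul_max_one (x y : L) :
    abv (x - y) ≤ max 1 (abv x) * max 1 (abv y) := by
  have h := hna x (-y)
  rw [← sub_eq_add_neg, abv.map_neg] at h
  refine h.trans (max_le ?_ ?_)
  · exact (le_max_right _ _).trans (le_mul_of_one_le_right (by positivity) (le_max_left _ _))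
  · exact (le_max_right _ _).trans (le_mul_of_one_le_left (by positivity) (le_max_left _ _))

lemma sq_mul_sq_mul_abv_sub_mul_abv_sub_le (a b α α' β β' : L) :
    abv a ^ 2 * abv b ^ 2 * (abv (α - β') * abv (α' - β')) * (max 1 (abv α') * max 1 (abv β)) ≤
      (abv a * (max 1 (abv α) * max 1 (abv α'))) ^ 2 *
        (abv b * (max 1 (abv β) * max 1 (abv β'))) ^ 2 := by
  have hαβ : 1 ≤ max 1 (abv α) * max 1 (abv β) :=
    one_le_mul_of_one_le_of_one_le (le_max_left _ _) (le_max_left _ _)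
  calc abv a ^ 2 * abv b ^ 2 * (abv (α - β') * abv (α' - β')) * (max 1 (abv α') * max 1 (abv β))
      ≤ abv a ^ 2 * abv b ^ 2 * (max 1 (abv α) * max 1 (abv β') *
          (max 1 (abv α') * max 1 (abv β'))) * (max 1 (abv α') * max 1 (abv β)) := by
        gcongr
        exacts [hna.abv_sub_le_max_one_mul_max_one _ _, hna.abv_sub_le_max_one_mul_max_one _ _]
    _ ≤ abv a ^ 2 * abv b ^ 2 * (max 1 (abv α) * max 1 (abv β') *
          (max 1 (abv α') * max 1 (abv β'))) * (max 1 (abv α') * max 1 (abv β)) *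
          (max 1 (abv α) * max 1 (abv β)) :=
        le_mul_of_one_le_right (by positivity) hαβ
    _ = _ := by ring

section

variable {a b α α' β β' : L}
  (hres : 1 ≤ abv a ^ 2 * abv b ^ 2 *
    (abv (α - β) * abv (α - β') * abv (α' - β) * abv (α' - β')))
include hres

lemma one_le_abv_sub_mul_sq_mul_sq :
    1 ≤ abv (α - β) * ((abv a * (max 1 (abv α) * max 1 (abv α'))) ^ 2 *
      (abv b * (max 1 (abv β) * max 1 (abv β'))) ^ 2) := by
  calc 1 ≤ abv (α - β) * abv (α' - β) *
        (abv a ^ 2 * abv b ^ 2 * (abv (α - β') * abv (α' - β'))) := by linarith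
    _ ≤ abv (α - β) * (abv a ^ 2 * abv b ^ 2 * (abv (α - β') * abv (α' - β')) *
          (max 1 (abv α') * max 1 (abv β))) := by
        rw [mul_assoc, mul_comm _ (max 1 (abv α') * max 1 (abv β))]
        gcongr
        exact hna.abv_sub_le_max_one_mul_max_one _ _
    _ ≤ _ := mul_le_mul_of_nonneg_left (hna.sq_mul_sq_mul_abv_sub_mul_abv_sub_le a b α α' β β')
        (abv.nonneg _)

variable (hb : 1 ≤ abv b) (hdisc : 1 ≤ abv a * abv (α - α'))
include hb hdisc

lemma one_le_abv_sub_mul_abv_sub_mul_sq_mul_sq :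
    1 ≤ abv (α - β) * abv (α - α') * ((abv a * (max 1 (abv α) * max 1 (abv α'))) ^ 2 *
      (abv b * (max 1 (abv β) * max 1 (abv β'))) ^ 2) := by
  set Ha := abv a * (max 1 (abv α) * max 1 (abv α'))
  set Hb := abv b * (max 1 (abv β) * max 1 (abv β'))
  have hK : abv a ^ 2 * abv b ^ 2 * (abv (α - β') * abv (α' - β')) ≤ Ha ^ 2 * Hb ^ 2 :=
    (le_mul_of_one_le_right (by positivity) (one_le_mul_of_one_le_of_one_le (le_max_left _ _)
      (le_max_left _ _))).trans (hna.sq_mul_sq_mul_abv_sub_mul_abv_sub_le a b α α' β β')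
  have hres' : 1 ≤ abv (α - β) * abv (α' - β) *
      (abv a ^ 2 * abv b ^ 2 * (abv (α - β') * abv (α' - β'))) := by linarith
  -- `|α' - β| ≤ max (|α - α'|, |α - β|)`
  have h := hna (α' - α) (α - β)
  rw [sub_add_sub_cancel, ← neg_sub α α', abv.map_neg] at h
  rcases le_max_iff.mp h with h | h
  · calc 1 ≤ _ := hres'
      _ ≤ abv (α - β) * abv (α - α') * (Ha ^ 2 * Hb ^ 2) := by gcongr
  · have hsq : 1 ≤ (abv (α - β) * (Ha * Hb)) ^ 2 :=
      calc 1 ≤ _ := hres'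
        _ ≤ abv (α - β) * abv (α - β) * (Ha ^ 2 * Hb ^ 2) := by gcongr
        _ = (abv (α - β) * (Ha * Hb)) ^ 2 := by ring
    have hHa : abv a ≤ Ha := le_mul_of_one_le_right (abv.nonneg _)
      (one_le_mul_of_one_le_of_one_le (le_max_left _ _) (le_max_left _ _))
    have hHb : 1 ≤ Hb := one_le_mul_of_one_le_of_one_le hb
      (one_le_mul_of_one_le_of_one_le (le_max_left _ _) (le_max_left _ _))
    calc 1 ≤ (abv (α - β) * (Ha * Hb)) * ((Ha * abv (α - α')) * Hb) :=
          one_le_mul_of_one_le_of_one_le ((one_le_sq_iff₀ (by positivity)).mp hsq)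
            (one_le_mul_of_one_le_of_one_le (hdisc.trans (by gcongr)) hHb)
      _ = abv (α - β) * abv (α - α') * (Ha ^ 2 * Hb ^ 2) := by ring

theorem max_one_inv_mul_rpow_le_abv_sub :
    max 1 (abv (α - α'))⁻¹ * (abv a * (max 1 (abv α) * max 1 (abv α'))) ^ (-(2 : ℝ)) *
      (abv b * (max 1 (abv β) * max 1 (abv β'))) ^ (-(2 : ℝ)) ≤ abv (α - β) := by
  have ha : 0 < abv a := pos_of_mul_pos_left (one_pos.trans_le hdisc) (abv.nonneg _)
  have ht : 0 < abv (α - α') := pos_of_mul_pos_right (one_pos.trans_le hdisc) ha.le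
  rw [Real.rpow_neg (by positivity), Real.rpow_neg (by positivity), Real.rpow_two, Real.rpow_two,
    mul_assoc, ← mul_inv]
  exact max_one_inv_mul_inv_le ht (by positivity) (hna.one_le_abv_sub_mul_sq_mul_sq hres)
    (hna.one_le_abv_sub_mul_abv_sub_mul_sq_mul_sq hres hb hdisc)

end

end IsNonarchimedean

namespace Ooto

section LaurentSeries

variable {Fq : Type} [Field Fq]

lemma polyToK_monomial (n : ℕ) (c : Fq) :
    polyToK Fq (monomial n c) = HahnSeries.single (-(n : ℤ)) c := by
  rw [polyToK, coe_eval₂RingHom, eval₂_monomial, TT, HahnSeries.single_pow, HahnSeries.C_apply,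
    HahnSeries.single_mul_single, one_pow, mul_one, zero_add, nsmul_eq_mul, mul_neg_one]

lemma coeff_polyToK (p : Fq[X]) (j : ℕ) : (polyToK Fq p).coeff (-(j : ℤ)) = p.coeff j := by
  induction p using Polynomial.induction_on' with
  | add p q hp hq => rw [map_add, HahnSeries.coeff_add, hp, hq, coeff_add]
  | monomial n c => simp [polyToK_monomial, HahnSeries.coeff_single, coeff_monomial, eq_comm]

lemma polyToK_injective : Function.Injective (polyToK Fq) := fun p q h =>
  Polynomial.ext fun j => by rw [← coeff_polyToK, h, coeff_polyToK]

lemma φ_injective : Function.Injective (φ Fq) :=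
  (toL Fq).injective.comp polyToK_injective

lemma one_le_kabs_polyToK [Fintype Fq] {p : Fq[X]} (hp : p ≠ 0) : 1 ≤ kabs Fq (polyToK Fq p) := by
  have hK : polyToK Fq p ≠ 0 := (map_ne_zero_iff _ polyToK_injective).mpr hp
  have hord : (polyToK Fq p).order ≤ 0 :=
    (HahnSeries.order_le_of_coeff_ne_zero (by
      rwa [coeff_polyToK, coeff_natDegree, Ne, leadingCoeff_eq_zero])).trans (by simp)
  rw [kabs, if_neg hK]
  exact one_le_zpow₀ (by exact_mod_cast Fintype.card_pos) (by omega)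

end LaurentSeries

section MinPoly

variable {Fq : Type} [Field Fq]

lemma evalL_eq_eval_map (P : Fq[X][X]) (γ : L Fq) : evalL Fq P γ = (P.map (φ Fq)).eval γ :=
  eval₂_eq_eval_map _

lemma IsMinPolyOf.unique {P Q : Fq[X][X]} {γ : L Fq} (hP : IsMinPolyOf Fq P γ)
    (hQ : IsMinPolyOf Fq Q γ) : P = Q := by
  obtain ⟨-, hPirr, hPprim, hPlc, hPγ⟩ := hP
  obtain ⟨-, hQirr, hQprim, hQlc, hQγ⟩ := hQ
  let ψ : RatFunc Fq →+* L Fq := (toL Fq).comp (IsFractionRing.lift polyToK_injective)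
  have hevalL (R : Fq[X][X]) :
      evalL Fq R γ = (R.map (algebraMap Fq[X] (RatFunc Fq))).eval₂ ψ γ := by
    rw [evalL, eval₂_map]
    congr 1
    exact RingHom.ext fun c => congrArg (toL Fq) (IsFractionRing.lift_algebraMap _ c).symm
  -- otherwise a Bézout relation `u P + w Q = 1` over `F_q(T)` would vanish at `γ`
  have hdvd : P ∣ Q := by
    rw [hPprim.dvd_iff_fraction_map_dvd_fraction_map (RatFunc Fq),
      ← (hPprim.irreducible_iff_irreducible_map_fraction_map.mp hPirr).coprime_iff_not_dvd.not_left]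
    rintro ⟨u, w, huw⟩
    simpa [eval₂_add, eval₂_mul, ← hevalL, hPγ, hQγ] using congrArg (eval₂ ψ γ) huw
  obtain ⟨u, hu⟩ := hPirr.associated_of_dvd hQirr hdvd
  obtain ⟨r, hr, hru⟩ := Polynomial.isUnit_iff.mp u.isUnit
  have hr1 : r = 1 := by
    refine (hPlc.of_mul_monic_left ?_).eq_one_of_isUnit hr
    rwa [← leadingCoeff_C r, ← leadingCoeff_mul, hru, hu]
  rw [← hu, ← hru, hr1, map_one, mul_one]

lemma IsMinPolyOf.evalL_ne_zero {P Q : Fq[X][X]} {γ δ : L Fq} (hP : IsMinPolyOf Fq P γ)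
    (hQ : IsMinPolyOf Fq Q δ) (hPQ : P ≠ Q) : evalL Fq Q γ ≠ 0 := fun h =>
  hPQ (hP.unique ⟨hQ.1, hQ.2.1, hQ.2.2.1, hQ.2.2.2.1, h⟩)

lemma isMinPolyOf_minPolyPrim {α : L Fq} (h : IsAlgElem Fq α) :
    IsMinPolyOf Fq (minPolyPrim Fq α) α := by
  rw [minPolyPrim, dif_pos h]
  exact h.choose_spec

end MinPoly

namespace IsConjOf

variable {Fq : Type} [Field Fq] {α α' β β' : L Fq}

lemma evalL_minPolyPrim (h : IsConjOf Fq α' α) (γ : L Fq) :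
    evalL Fq (minPolyPrim Fq α) γ =
      φ Fq (minPolyPrim Fq α).leadingCoeff * ((γ - α) * (γ - α')) := by
  rw [evalL_eq_eval_map, h.2]
  simp only [eval_mul, eval_sub, eval_X, eval_C, mul_assoc]

lemma isMinPolyOf (h : IsConjOf Fq α' α) (hα : IsAlgElem Fq α) :
    IsMinPolyOf Fq (minPolyPrim Fq α) α' := by
  obtain ⟨hdeg, hirr, hprim, hlc, -⟩ := isMinPolyOf_minPolyPrim hα
  exact ⟨hdeg, hirr, hprim, hlc, by rw [h.evalL_minPolyPrim, sub_self, mul_zero, mul_zero]⟩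

lemma map_resultant (hα : IsConjOf Fq α' α) (hβ : IsConjOf Fq β' β) :
    φ Fq (resultant (minPolyPrim Fq α) (minPolyPrim Fq β)) =
      φ Fq (minPolyPrim Fq α).leadingCoeff ^ 2 *
        (evalL Fq (minPolyPrim Fq β) α * evalL Fq (minPolyPrim Fq β) α') := by
  have hβdeg : ((minPolyPrim Fq β).map (φ Fq)).natDegree ≤ 2 := natDegree_map_le.trans hβ.1.le
  rw [hα.1, hβ.1, ← resultant_map_map, hα.2, resultant_C_mul_X_sub_C_mul_X_sub_C _ _ _ hβdeg,
    evalL_eq_eval_map, evalL_eq_eval_map]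

lemma leadingCoeff_ne_zero (h : IsConjOf Fq α' α) : (minPolyPrim Fq α).leadingCoeff ≠ 0 :=
  Polynomial.leadingCoeff_ne_zero.mpr (ne_zero_of_natDegree_gt (h.1 ▸ two_pos : 0 < _))

lemma φ_leadingCoeff_ne_zero (h : IsConjOf Fq α' α) :
    φ Fq (minPolyPrim Fq α).leadingCoeff ≠ 0 :=
  (map_ne_zero_iff _ φ_injective).mpr h.leadingCoeff_ne_zero

lemma map_discr (h : IsConjOf Fq α' α) :
    φ Fq (discr (minPolyPrim Fq α)) = (φ Fq (minPolyPrim Fq α).leadingCoeff * (α - α')) ^ 2 := by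
  have hP : minPolyPrim Fq α ≠ 0 := Polynomial.leadingCoeff_ne_zero.mp h.leadingCoeff_ne_zero
  have hdeg : (minPolyPrim Fq α).degree = 2 := (degree_eq_iff_natDegree_eq hP).mpr h.1
  rw [← discr_map_of_degree_eq_two _ _ hdeg (by rwa [degree_map_eq_of_injective φ_injective]),
    h.2, discr_C_mul_X_sub_C_mul_X_sub_C h.φ_leadingCoeff_ne_zero]

lemma resultant_minPolyPrim_ne_zero (hα : IsConjOf Fq α' α) (hβ : IsConjOf Fq β' β)
    (hαalg : IsAlgElem Fq α) (hβalg : IsAlgElem Fq β) (hPQ : minPolyPrim Fq α ≠ minPolyPrim Fq β) :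
    resultant (minPolyPrim Fq α) (minPolyPrim Fq β) ≠ 0 := by
  have hQ := isMinPolyOf_minPolyPrim hβalg
  rw [← (map_ne_zero_iff _ φ_injective), hα.map_resultant hβ]
  exact mul_ne_zero (pow_ne_zero 2 hα.φ_leadingCoeff_ne_zero)
    (mul_ne_zero ((isMinPolyOf_minPolyPrim hαalg).evalL_ne_zero hQ hPQ)
      ((hα.isMinPolyOf hαalg).evalL_ne_zero hQ hPQ))

lemma discr_minPolyPrim_ne_zero (h : IsConjOf Fq α' α) (hne : α ≠ α') :
    discr (minPolyPrim Fq α) ≠ 0 := by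
  rw [← (map_ne_zero_iff _ φ_injective), h.map_discr]
  exact pow_ne_zero 2 (mul_ne_zero h.φ_leadingCoeff_ne_zero (sub_ne_zero.mpr hne))

end IsConjOf

namespace IsAbsExt

variable {Fq : Type} [Field Fq] [Fintype Fq] {v : L Fq → ℝ}

def toAbsoluteValue (hv : IsAbsExt Fq v) : AbsoluteValue (L Fq) ℝ where
  toFun := v
  map_mul' := hv.map_mul
  nonneg' := hv.nonneg
  eq_zero' := hv.eq_zero_iff
  add_le' x y := (hv.add_le x y).trans (max_le_add_of_nonneg (hv.nonneg x) (hv.nonneg y))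

lemma isNonarchimedean (hv : IsAbsExt Fq v) : IsNonarchimedean hv.toAbsoluteValue := hv.add_le

lemma one_le_apply_φ (hv : IsAbsExt Fq v) {p : Fq[X]} (hp : p ≠ 0) : 1 ≤ v (φ Fq p) :=
  (hv.extends_kabs _).symm ▸ one_le_kabs_polyToK hp

lemma Hpoly_eq_gaussNorm (hv : IsAbsExt Fq v) (P : Fq[X][X]) :
    Hpoly Fq P = (P.map (φ Fq)).gaussNorm hv.toAbsoluteValue 1 := by
  rw [← gaussNorm_coe_powerSeries _ _ zero_le_one, PowerSeries.gaussNorm_eq, Hpoly]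
  simp only [coeff_coe, coeff_map, one_pow, mul_one]
  exact iSup_congr fun i => (hv.extends_kabs _).symm

lemma heightAlg_eq (hv : IsAbsExt Fq v) {α α' : L Fq} (h : IsConjOf Fq α' α) :
    heightAlg Fq α =
      v (φ Fq (minPolyPrim Fq α).leadingCoeff) * (max 1 (v α) * max 1 (v α')) := by
  rw [heightAlg, hv.Hpoly_eq_gaussNorm, h.2]
  exact gaussNorm_C_mul_X_sub_C_mul_X_sub_C hv.isNonarchimedean _ _ _

lemma apply_φ_resultant (hv : IsAbsExt Fq v) {α α' β β' : L Fq} (hα : IsConjOf Fq α' α)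
    (hβ : IsConjOf Fq β' β) :
    v (φ Fq (resultant (minPolyPrim Fq α) (minPolyPrim Fq β))) =
      v (φ Fq (minPolyPrim Fq α).leadingCoeff) ^ 2 * v (φ Fq (minPolyPrim Fq β).leadingCoeff) ^ 2 *
        (v (α - β) * v (α - β') * v (α' - β) * v (α' - β')) := by
  rw [hα.map_resultant hβ, hβ.evalL_minPolyPrim, hβ.evalL_minPolyPrim]
  simp only [sq, hv.map_mul]
  ring

lemma apply_φ_discr (hv : IsAbsExt Fq v) {α α' : L Fq} (h : IsConjOf Fq α' α) :
    v (φ Fq (discr (minPolyPrim Fq α))) =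
      (v (φ Fq (minPolyPrim Fq α).leadingCoeff) * v (α - α')) ^ 2 := by
  rw [h.map_discr, sq, sq, hv.map_mul, hv.map_mul]

end IsAbsExt

theorem stmt10 (Fq : Type) [Field Fq] [Fintype Fq]
    (v : L Fq → ℝ) (hv : IsAbsExt Fq v)
    (α α' β β' : L Fq) (hαalg : IsAlgElem Fq α) (hβalg : IsAlgElem Fq β)
    (hαconj : IsConjOf Fq α' α) (hβconj : IsConjOf Fq β' β)
    (hne : α ≠ α') (hPne : minPolyPrim Fq α ≠ minPolyPrim Fq β) :
    max 1 (v (α - α'))⁻¹ * heightAlg Fq α ^ (-(2 : ℝ)) * heightAlg Fq β ^ (-(2 : ℝ)) ≤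
      v (α - β) := by
  have hres := hv.apply_φ_resultant hαconj hβconj ▸
    hv.one_le_apply_φ (hαconj.resultant_minPolyPrim_ne_zero hβconj hαalg hβalg hPne)
  have hdisc := hv.apply_φ_discr hαconj ▸ hv.one_le_apply_φ (hαconj.discr_minPolyPrim_ne_zero hne)
  rw [one_le_sq_iff₀ (mul_nonneg (hv.nonneg _) (hv.nonneg _))] at hdisc
  rw [hv.heightAlg_eq hαconj, hv.heightAlg_eq hβconj]
  exact IsNonarchimedean.max_one_inv_mul_rpow_le_abv_sub hv.isNonarchimedean hres
    (hv.one_le_apply_φ hβconj.leadingCoeff_ne_zero) hdisc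

end Ooto
end
end

section
/- Let a = (a_n)_{n≥0} be a non-ultimately periodic sequence over F_q and set ξ := Σ_{n=0}^{∞} a_n T^{−n} ∈ F_q((T^{-1})). Assume there exist integers n_0 ≥ 1 and κ ≥ 2 such that p(a, n) ≤ κn for all n ≥ n_0. If the Diophantine exponent Dio(a) is finite, then w_1(ξ) ≤ 8(κ+1)²(2κ+1)·Dio(a) − 1. -/
open Polynomial Filter
open scoped ENNReal

noncomputable section

namespace Ooto

variable (Fq : Type) [Field Fq] [Fintype Fq]

/-!
Let `P = A + BX` with `|P(ξ)| ≤ H(P)^{-w}` and `d = deg B` large. For `1 ≤ m < wd` the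
coefficient of `T^{-m}` in `A + Bξ` vanishes; it equals `∑_r B_r a_{m+r}`, so `a` obeys a linear
recurrence of order `d` on an initial segment. As `p(a, d) ≤ κd`, two blocks of length `d` starting
at positions `i < j ≤ κd + 1` coincide, and the recurrence propagates the coincidence: `a` has
period `j - i` from position `i` up to about `(w + 1)d`. This prefix witnesses Condition `(*)_ρ`
with `ρ = (w + 1)/(4κ)`, hence `w_1(ξ) + 1 ≤ 4κ Dio(a)`, and `4κ ≤ 8(κ + 1)²(2κ + 1)`.
-/

section PolyToK

variable {Fq}
omit [Fintype Fq]

lemma polyToK_eq_sum (B : Fq[X]) :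
    polyToK Fq B = ∑ i ∈ Finset.range (B.natDegree + 1),
      HahnSeries.single (-(i : ℤ)) (B.coeff i) := by
  rw [polyToK, coe_eval₂RingHom, eval₂_eq_sum_range]
  refine Finset.sum_congr rfl fun i _ => ?_
  rw [TT, HahnSeries.single_pow, HahnSeries.C_apply, HahnSeries.single_mul_single]
  simp

lemma coeff_polyToK_neg (B : Fq[X]) (n : ℕ) : (polyToK Fq B).coeff (-(n : ℤ)) = B.coeff n := by
  simp only [polyToK_eq_sum, HahnSeries.coeff_sum, HahnSeries.coeff_single, neg_inj,
    Nat.cast_inj, Finset.sum_ite_eq, Finset.mem_range]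
  split_ifs with hn
  · rfl
  · exact (coeff_eq_zero_of_natDegree_lt (by omega)).symm

lemma coeff_polyToK_of_pos (B : Fq[X]) {m : ℤ} (hm : 0 < m) : (polyToK Fq B).coeff m = 0 := by
  rw [polyToK_eq_sum, HahnSeries.coeff_sum]
  exact Finset.sum_eq_zero fun i _ => HahnSeries.coeff_single_of_ne (by omega)

lemma coeff_polyToK_neg_natDegree_ne_zero {B : Fq[X]} (hB : B ≠ 0) :
    (polyToK Fq B).coeff (-(B.natDegree : ℤ)) ≠ 0 := by
  rw [coeff_polyToK_neg]
  exact leadingCoeff_ne_zero.mpr hB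

lemma order_polyToK {B : Fq[X]} (hB : B ≠ 0) : (polyToK Fq B).order = -(B.natDegree : ℤ) := by
  have hlead := coeff_polyToK_neg_natDegree_ne_zero hB
  refine le_antisymm (HahnSeries.order_le_of_coeff_ne_zero hlead) ?_
  rw [HahnSeries.le_order_iff_forall (HahnSeries.ne_zero_of_coeff_ne_zero hlead)]
  intro m hm
  rcases le_or_gt m 0 with hm0 | hm0
  · obtain ⟨n, rfl⟩ : ∃ n : ℕ, m = -n := ⟨m.natAbs, by omega⟩
    rw [coeff_polyToK_neg]
    exact coeff_eq_zero_of_natDegree_lt (by omega)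
  · exact coeff_polyToK_of_pos B hm0

lemma coeff_polyToK_mul (B : Fq[X]) (ξ : K Fq) (m : ℤ) :
    (polyToK Fq B * ξ).coeff m
      = ∑ i ∈ Finset.range (B.natDegree + 1), B.coeff i * ξ.coeff (m + i) := by
  rw [polyToK_eq_sum, Finset.sum_mul, HahnSeries.coeff_sum]
  refine Finset.sum_congr rfl fun i _ => ?_
  simpa using HahnSeries.coeff_single_mul_add (r := B.coeff i) (x := ξ) (b := -(i : ℤ)) (a := m + i)

end PolyToK

section Absolute

variable {Fq}

lemma one_lt_card_real : (1 : ℝ) < Fintype.card Fq := by exact_mod_cast Fintype.one_lt_card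

lemma kabs_of_ne_zero {f : K Fq} (hf : f ≠ 0) :
    kabs Fq f = (Fintype.card Fq : ℝ) ^ (-f.order) :=
  if_neg hf

lemma kabs_nonneg (f : K Fq) : 0 ≤ kabs Fq f := by
  unfold kabs
  split_ifs <;> positivity

lemma kabs_mul (f g : K Fq) : kabs Fq (f * g) = kabs Fq f * kabs Fq g := by
  rcases eq_or_ne f 0 with rfl | hf
  · simp [kabs]
  rcases eq_or_ne g 0 with rfl | hg
  · simp [kabs]
  rw [kabs_of_ne_zero hf, kabs_of_ne_zero hg, kabs_of_ne_zero (mul_ne_zero hf hg),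
    HahnSeries.order_mul hf hg, neg_add, zpow_add₀ (by positivity)]

lemma kabs_add_eq_left {x y : K Fq} (h : kabs Fq y < kabs Fq x) :
    kabs Fq (x + y) = kabs Fq x := by
  have hx : x ≠ 0 := by
    rintro rfl
    exact (kabs_nonneg y).not_gt (by simpa [kabs] using h)
  rcases eq_or_ne y 0 with rfl | hy
  · rw [add_zero]
  have horder : x.order < y.order := by
    rw [kabs_of_ne_zero hx, kabs_of_ne_zero hy] at h
    have := (zpow_lt_zpow_iff_right₀ one_lt_card_real).mp h
    omega
  have hcoeff : (x + y).coeff x.order ≠ 0 := by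
    rw [HahnSeries.coeff_add, HahnSeries.coeff_eq_zero_of_lt_order horder, add_zero]
    exact HahnSeries.coeff_order_eq_zero.not.mpr hx
  have hxy : x + y ≠ 0 := HahnSeries.ne_zero_of_coeff_ne_zero hcoeff
  have horder_add : (x + y).order = x.order := by
    refine le_antisymm (HahnSeries.order_le_of_coeff_ne_zero hcoeff) ?_
    simpa [min_eq_left horder.le] using HahnSeries.min_order_le_order_add hxy
  rw [kabs_of_ne_zero hxy, kabs_of_ne_zero hx, horder_add]

lemma coeff_eq_zero_of_kabs_le {f : K Fq} {t : ℝ}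
    (h : kabs Fq f ≤ (Fintype.card Fq : ℝ) ^ (-t)) {m : ℤ} (hm : (m : ℝ) < t) :
    f.coeff m = 0 := by
  rcases eq_or_ne f 0 with rfl | hf
  · simp
  apply HahnSeries.coeff_eq_zero_of_lt_order
  rw [kabs_of_ne_zero hf, ← Real.rpow_intCast,
    Real.rpow_le_rpow_left_iff one_lt_card_real] at h
  push_cast at h
  exact_mod_cast (by linarith : (m : ℝ) < f.order)

lemma kabs_le_one_of_coeff_neg {ξ : K Fq} (h : ∀ m : ℤ, m < 0 → ξ.coeff m = 0) :
    kabs Fq ξ ≤ 1 := by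
  rcases eq_or_ne ξ 0 with rfl | hξ
  · simp [kabs]
  have horder : 0 ≤ ξ.order := by
    by_contra! hlt
    exact HahnSeries.coeff_order_eq_zero.not.mpr hξ (h _ hlt)
  rw [kabs_of_ne_zero hξ]
  exact zpow_le_one_of_nonpos₀ one_lt_card_real.le (by omega)

lemma kabs_polyToK {B : Fq[X]} (hB : B ≠ 0) :
    kabs Fq (polyToK Fq B) = (Fintype.card Fq : ℝ) ^ (B.natDegree : ℤ) := by
  have hne := HahnSeries.ne_zero_of_coeff_ne_zero (coeff_polyToK_neg_natDegree_ne_zero hB)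
  rw [kabs_of_ne_zero hne, order_polyToK hB, neg_neg]

lemma kabs_polyToK_le (B : Fq[X]) :
    kabs Fq (polyToK Fq B) ≤ (Fintype.card Fq : ℝ) ^ (B.natDegree : ℤ) := by
  rcases eq_or_ne B 0 with rfl | hB
  · simp [kabs]
  · exact (kabs_polyToK hB).le

end Absolute

lemma finite_setOf_natDegree_le_of_coeff_mem {R : Type*} [Semiring R] (n : ℕ)
    {S : Set R} (hS : S.Finite) :
    {p : R[X] | p.natDegree ≤ n ∧ ∀ i ≤ n, p.coeff i ∈ S}.Finite := by
  refine Set.Finite.of_finite_image (f := fun p (i : Fin (n + 1)) => p.coeff i)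
    ((Set.Finite.pi fun _ => hS).subset ?_) ?_
  · rintro _ ⟨p, ⟨_, hp⟩, rfl⟩ i -
    exact hp i (Nat.lt_succ_iff.mp i.2)
  · rintro p ⟨hp, -⟩ q ⟨hq, -⟩ hpq
    ext i
    by_cases hi : i ≤ n
    · exact congrFun hpq ⟨i, Nat.lt_succ_of_le hi⟩
    · rw [coeff_eq_zero_of_natDegree_lt (by omega), coeff_eq_zero_of_natDegree_lt (by omega)]

section LinearForms

variable {Fq}

omit [Fintype Fq] in
lemma evalK_of_natDegree_le_one {P : Fq[X][X]} (hP : P.natDegree ≤ 1) (ξ : K Fq) :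
    evalK Fq P ξ = polyToK Fq (P.coeff 0) + polyToK Fq (P.coeff 1) * ξ := by
  conv_lhs => rw [evalK, eq_X_add_C_of_natDegree_le_one hP]
  simp only [eval₂_add, eval₂_mul, eval₂_C, eval₂_X]
  ring

lemma Hpoly_of_natDegree_le_one {P : Fq[X][X]} (hP : P.natDegree ≤ 1) :
    Hpoly Fq P = max (kabs Fq (polyToK Fq (P.coeff 0))) (kabs Fq (polyToK Fq (P.coeff 1))) := by
  have hle : ∀ i, kabs Fq (polyToK Fq (P.coeff i))
      ≤ max (kabs Fq (polyToK Fq (P.coeff 0))) (kabs Fq (polyToK Fq (P.coeff 1)))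
    | 0 => le_max_left _ _
    | 1 => le_max_right _ _
    | n + 2 => by
      rw [coeff_eq_zero_of_natDegree_lt (by omega), map_zero, kabs, if_pos rfl]
      exact (kabs_nonneg _).trans (le_max_left _ _)
  have hbdd : BddAbove (Set.range fun i => kabs Fq (polyToK Fq (P.coeff i))) :=
    ⟨_, Set.forall_mem_range.mpr hle⟩
  exact le_antisymm (ciSup_le hle) (max_le (le_ciSup hbdd 0) (le_ciSup hbdd 1))

/-- Otherwise `|A + Bξ| = |A| = H(P) > 1`. -/
lemma natDegree_coeff_zero_le {ξ : K Fq} (hξ : kabs Fq ξ ≤ 1) {w : ℝ} (hw : 0 < w)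
    {P : Fq[X][X]} (hP : P.natDegree ≤ 1)
    (hle : kabs Fq (evalK Fq P ξ) ≤ Hpoly Fq P ^ (-w)) :
    (P.coeff 0).natDegree ≤ (P.coeff 1).natDegree := by
  by_contra! hlt
  have hA : P.coeff 0 ≠ 0 := by
    rintro h
    simp [h] at hlt
  have hBA : kabs Fq (polyToK Fq (P.coeff 1)) < kabs Fq (polyToK Fq (P.coeff 0)) := by
    rw [kabs_polyToK hA]
    exact (kabs_polyToK_le _).trans_lt
      (zpow_lt_zpow_right₀ one_lt_card_real (by exact_mod_cast hlt))
  have hA1 : 1 < kabs Fq (polyToK Fq (P.coeff 0)) := by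
    rw [kabs_polyToK hA]
    exact one_lt_zpow₀ one_lt_card_real (by omega)
  have heval : kabs Fq (evalK Fq P ξ) = kabs Fq (polyToK Fq (P.coeff 0)) := by
    rw [evalK_of_natDegree_le_one hP, kabs_add_eq_left]
    rw [kabs_mul]
    exact (mul_le_of_le_one_right (kabs_nonneg _) hξ).trans_lt hBA
  rw [heval, Hpoly_of_natDegree_le_one hP, max_eq_left hBA.le] at hle
  have hH := Real.rpow_lt_one_of_one_lt_of_neg hA1 (neg_neg_of_pos hw)
  linarith

lemma exists_natDegree_coeff_one_gt {ξ : K Fq} (hξ : kabs Fq ξ ≤ 1) {w : ℝ} (hw : 0 < w)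
    (hinf : {P : Fq[X][X] | P.natDegree ≤ 1 ∧ 0 < kabs Fq (evalK Fq P ξ) ∧
      kabs Fq (evalK Fq P ξ) ≤ Hpoly Fq P ^ (-w)}.Infinite) (D : ℕ) :
    ∃ P : Fq[X][X], P.natDegree ≤ 1 ∧ kabs Fq (evalK Fq P ξ) ≤ Hpoly Fq P ^ (-w) ∧
      D < (P.coeff 1).natDegree := by
  by_contra! hbound
  have hfin : {B : Fq[X] | B.natDegree ≤ D ∧ ∀ i ≤ D, B.coeff i ∈ Set.univ}.Finite :=
    finite_setOf_natDegree_le_of_coeff_mem D Set.finite_univ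
  refine hinf ((finite_setOf_natDegree_le_of_coeff_mem 1 hfin).subset ?_)
  rintro P ⟨hP, -, hle⟩
  have hB := hbound P hP hle
  have hA := (natDegree_coeff_zero_le hξ hw hP hle).trans hB
  refine ⟨hP, fun i hi => ?_⟩
  interval_cases i
  · exact ⟨hA, fun _ _ => trivial⟩
  · exact ⟨hB, fun _ _ => trivial⟩

end LinearForms

section Words

variable {A : Type*}

lemma wordPow_natCast (V : List A) (q : ℕ) : wordPow V q = (List.replicate q V).flatten := by
  simp [wordPow]

lemma wordPow_one (V : List A) : wordPow V 1 = V := by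
  simpa using wordPow_natCast V 1

lemma length_wordPow_natCast (V : List A) (q : ℕ) : (wordPow V q).length = q * V.length := by
  simp [wordPow_natCast, List.length_flatten, List.sum_replicate]

lemma apply_add_mul_of_periodicOn (b : ℕ → A) {i s N : ℕ}
    (hper : ∀ n, i ≤ n → n + s < N → b (n + s) = b n) (t c : ℕ) (h : i + t + s * c < N) :
    b (i + t + s * c) = b (i + t) := by
  induction c with
  | zero => simp
  | succ c ih =>
    rw [Nat.mul_succ, ← add_assoc] at h ⊢
    rw [hper _ (by omega) h, ih (by omega)]

lemma isPrefixOfSeq_of_periodicOn (b : ℕ → A) {i s N : ℕ}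
    (hper : ∀ n, i ≤ n → n + s < N → b (n + s) = b n) :
    IsPrefixOfSeq (List.ofFn (fun t : Fin i => b t) ++
      wordPow (List.ofFn fun t : Fin s => b (i + t)) ((N - i) / s : ℕ)) b := by
  rw [wordPow_natCast, ← List.ofFn_fin_repeat]
  intro k hk
  simp only [List.length_append, List.length_ofFn] at hk
  simp only [List.get_eq_getElem]
  rcases lt_or_ge k i with hki | hik
  · simp [List.getElem_append_left, hki]
  · rw [List.getElem_append_right (by simpa using hik)]
    simp only [List.length_ofFn, List.getElem_ofFn, Fin.repeat_apply, Fin.modNat]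
    have hkN : k < N := by
      have := Nat.div_mul_le_self (N - i) s
      omega
    have hk : i + (k - i) % s + s * ((k - i) / s) = k := by
      have := Nat.mod_add_div (k - i) s
      omega
    rw [← apply_add_mul_of_periodicOn b hper _ _ (hk ▸ hkN), hk]

end Words

section Recurrence

lemma apply_add_eq_of_recurrence {R : Type*} [Ring R] [NoZeroDivisors R] (c b : ℕ → R)
    {d i j N : ℕ} (hbd : b d ≠ 0) (hij : i ≤ j)
    (hrec : ∀ m, i ≤ m → m + d < N → ∑ r ∈ Finset.range (d + 1), b r * c (m + r) = 0)
    (hwin : ∀ t < d, c (i + t) = c (j + t)) :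
    ∀ t, j + t < N → c (i + t) = c (j + t) := by
  intro t
  induction t using Nat.strong_induction_on with
  | _ t ih =>
    intro ht
    rcases lt_or_ge t d with htd | htd
    · exact hwin t htd
    obtain ⟨t, rfl⟩ : ∃ t', t = t' + d := ⟨t - d, by omega⟩
    have hlast : ∀ m, i ≤ m → m + d < N →
        b d * c (m + d) = -∑ r ∈ Finset.range d, b r * c (m + r) := fun m hm hmN =>
      eq_neg_of_add_eq_zero_right (by rw [← Finset.sum_range_succ]; exact hrec m hm hmN)
    have hsum : ∑ r ∈ Finset.range d, b r * c (i + t + r)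
        = ∑ r ∈ Finset.range d, b r * c (j + t + r) := by
      refine Finset.sum_congr rfl fun r hr => ?_
      rw [Finset.mem_range] at hr
      rw [add_assoc, add_assoc, ih (t + r) (by omega) (by omega)]
    have := hlast (i + t) (by omega) (by omega)
    rw [hsum, ← hlast (j + t) (by omega) (by omega)] at this
    simpa [add_assoc] using mul_left_cancel₀ hbd this

variable {A : Type*}

lemma exists_eq_blocks_of_complexity_le (a : ℕ → A) {n k : ℕ} (h : complexity a n ≤ k) :
    ∃ i j, 1 ≤ i ∧ i < j ∧ j ≤ k + 1 ∧ ∀ t < n, a (i + t) = a (j + t) := by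
  have hmaps : Set.MapsTo (fun m (t : Fin n) => a (m + t)) (Finset.Icc 1 (k + 1) : Set ℕ)
      {w : Fin n → A | ∃ i : ℕ, ∀ t : Fin n, w t = a (i + t)} := fun m _ => ⟨m, fun _ => rfl⟩
  have hcard : complexity a n < ((Finset.Icc 1 (k + 1) : Finset ℕ) : Set ℕ).encard := by
    rw [Set.encard_coe_eq_coe_finsetCard, Nat.card_Icc]
    exact h.trans_lt (by norm_cast; omega)
  obtain ⟨i, hi, j, hj, hne, heq⟩ := Set.exists_ne_map_eq_of_encard_lt_of_maps_to hcard hmaps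
  simp only [Finset.coe_Icc, Set.mem_Icc] at hi hj
  have hblock := fun t (ht : t < n) => congrFun heq ⟨t, ht⟩
  rcases lt_or_gt_of_ne hne with hij | hji
  · exact ⟨i, j, hi.1, hij, hj.2, hblock⟩
  · exact ⟨j, i, hj.1, hji, hi.2, fun t ht => (hblock t ht).symm⟩

lemma exists_periodicOn_of_recurrence {R : Type*} [Ring R] [NoZeroDivisors R] (a b : ℕ → R)
    {d k N : ℕ} (hbd : b d ≠ 0) (hcomp : complexity a d ≤ k)
    (hrec : ∀ m, 1 ≤ m → m + d < N → ∑ r ∈ Finset.range (d + 1), b r * a (m + r) = 0) :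
    ∃ i s, 1 ≤ i ∧ 0 < s ∧ i + s ≤ k + 1 ∧ ∀ n, i ≤ n → n + s < N → a (n + s) = a n := by
  obtain ⟨i, j, hi, hij, hjk, hwin⟩ := exists_eq_blocks_of_complexity_le a hcomp
  have hshift := apply_add_eq_of_recurrence a b hbd hij.le
    (fun m hm => hrec m (hi.trans hm)) hwin
  refine ⟨i, j - i, hi, by omega, by omega, fun n hn hnN => ?_⟩
  have := hshift (n - i) (by omega)
  rw [show i + (n - i) = n by omega, show j + (n - i) = n + (j - i) by omega] at this
  exact this.symm

end Recurrence

section Diophantine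

variable {A : Type*}

lemma satisfiesCond_one (b : ℕ → A) : SatisfiesCond b 1 := by
  refine ⟨fun _ => [], fun n => List.ofFn fun t : Fin (n + 1) => b t, fun _ => 1,
    fun n => by simp, fun _ => zero_le_one, fun n => ?_,
    fun n => by simp only [wordPow_one, le_refl, one_mul], strictMono_nat_of_lt_succ fun n => ?_⟩
  · intro i hi
    simp only [wordPow_one, List.nil_append, List.get_eq_getElem, List.getElem_ofFn]
  · simp only [wordPow_one, List.length_ofFn, Nat.lt_succ_self]

lemma le_dioExp {b : ℕ → A} {ρ : ℝ} (h : SatisfiesCond b ρ) : (ρ : EReal) ≤ dioExp b :=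
  le_sSup ⟨ρ, rfl, h⟩

lemma satisfiesCond_of_forall_exists_length_ge (b : ℕ → A) (ρ : ℝ)
    (h : ∀ M : ℕ, ∃ (U V : List A) (w : ℝ), V ≠ [] ∧ 0 ≤ w ∧
      IsPrefixOfSeq (U ++ wordPow V w) b ∧
      ρ * ((U.length + V.length : ℕ) : ℝ) ≤ ((U.length + (wordPow V w).length : ℕ) : ℝ) ∧
      M ≤ (wordPow V w).length) :
    SatisfiesCond b ρ := by
  choose U V w hV hw hpre hρ hM using h
  let M : ℕ → ℕ := fun n => Nat.rec 0 (fun _ m => (wordPow (V m) (w m)).length + 1) n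
  refine ⟨U ∘ M, V ∘ M, w ∘ M, fun n => hV _, fun n => hw _, fun n => hpre _, fun n => hρ _,
    strictMono_nat_of_lt_succ fun n => ?_⟩
  exact Nat.lt_of_succ_le (hM (M (n + 1)))

end Diophantine

section MainStep

variable {Fq}

/-- The coefficient of `T^{-m}` in `A + Bξ` is `∑_r B_r a_{m+r}` for `m ≥ 1`, and it vanishes
for `m < w deg B` because `|A + Bξ| ≤ H(P)^{-w} = q^{-w deg B}`. -/
lemma sum_coeff_mul_eq_zero_of_kabs_evalK_le (a : ℕ → Fq) {ξ : K Fq}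
    (hξ : ∀ n : ℕ, ξ.coeff (n : ℤ) = a n) {P : Fq[X][X]} (hP : P.natDegree ≤ 1)
    (hA : (P.coeff 0).natDegree ≤ (P.coeff 1).natDegree) {w : ℝ}
    (hle : kabs Fq (evalK Fq P ξ) ≤ Hpoly Fq P ^ (-w)) {m : ℕ} (hm : 1 ≤ m)
    (hmw : (m : ℝ) < w * (P.coeff 1).natDegree) :
    ∑ r ∈ Finset.range ((P.coeff 1).natDegree + 1), (P.coeff 1).coeff r * a (m + r) = 0 := by
  set d := (P.coeff 1).natDegree
  have hB : P.coeff 1 ≠ 0 := by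
    rintro hB
    simp only [d, hB, natDegree_zero, Nat.cast_zero, mul_zero] at hmw
    exact (Nat.cast_nonneg m).not_gt hmw
  have hH : Hpoly Fq P = (Fintype.card Fq : ℝ) ^ (d : ℝ) := by
    rw [Hpoly_of_natDegree_le_one hP, kabs_polyToK hB, Real.rpow_natCast, ← zpow_natCast,
      max_eq_right ((kabs_polyToK_le _).trans
        (zpow_le_zpow_right₀ one_lt_card_real.le (by exact_mod_cast hA)))]
  rw [hH, ← Real.rpow_mul (by positivity), mul_neg, mul_comm] at hle
  have hcoeff := coeff_eq_zero_of_kabs_le hle (m := m) (by exact_mod_cast hmw)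
  rw [evalK_of_natDegree_le_one hP, HahnSeries.coeff_add,
    coeff_polyToK_of_pos _ (by exact_mod_cast hm), zero_add, coeff_polyToK_mul] at hcoeff
  simpa only [← Nat.cast_add, hξ] using hcoeff

lemma exists_prefix_of_kabs_evalK_le (a : ℕ → Fq) {ξ : K Fq}
    (hξ : ∀ n : ℕ, ξ.coeff (n : ℤ) = a n) {κ : ℕ} (hκ : 0 < κ) {w : ℝ}
    (hw : 4 * κ ≤ w + 1) {P : Fq[X][X]} (hP : P.natDegree ≤ 1)
    (hd : 0 < (P.coeff 1).natDegree) (hA : (P.coeff 0).natDegree ≤ (P.coeff 1).natDegree)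
    (hcomp : complexity a (P.coeff 1).natDegree ≤ ((κ * (P.coeff 1).natDegree : ℕ) : ℕ∞))
    (hle : kabs Fq (evalK Fq P ξ) ≤ Hpoly Fq P ^ (-w)) :
    ∃ (U V : List Fq) (w' : ℝ), V ≠ [] ∧ 0 ≤ w' ∧ IsPrefixOfSeq (U ++ wordPow V w') a ∧
      (w + 1) / (4 * κ) * ((U.length + V.length : ℕ) : ℝ)
        ≤ ((U.length + (wordPow V w').length : ℕ) : ℝ) ∧
      (P.coeff 1).natDegree ≤ (wordPow V w').length := by
  set d := (P.coeff 1).natDegree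
  -- the recurrence holds for `m < wd`, i.e. for `m + d < ⌈wd⌉ + d`
  set N := ⌈w * d⌉₊ + d
  have hbd : (P.coeff 1).coeff d ≠ 0 := leadingCoeff_ne_zero.mpr (by rintro h; simp [d, h] at hd)
  obtain ⟨i, s, hi, hs, his, hper⟩ := exists_periodicOn_of_recurrence (N := N) a
    (P.coeff 1).coeff hbd hcomp fun m hm hmN =>
      sum_coeff_mul_eq_zero_of_kabs_evalK_le a hξ hP hA hle hm
        (Nat.lt_ceil.mp (show m < ⌈w * d⌉₊ by omega))
  refine ⟨_, _, _, by simpa using hs.ne', by positivity, isPrefixOfSeq_of_periodicOn a hper, ?_⟩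
  simp only [List.length_ofFn, length_wordPow_natCast]
  set x := (N - i) / s * s
  have hκr : (1 : ℝ) ≤ κ := by exact_mod_cast hκ
  have hdr : (1 : ℝ) ≤ d := by exact_mod_cast hd
  have hisr : (i + s : ℝ) ≤ κ * d + 1 := by exact_mod_cast his
  have hN : w * d + d ≤ N := by
    simp only [N, Nat.cast_add]
    linarith [Nat.le_ceil (w * d)]
  have hx : (N : ℝ) + 1 ≤ i + x + s := by
    have := Nat.lt_div_mul_add (a := N - i) hs
    exact_mod_cast (by omega : N + 1 ≤ i + x + s)
  constructor
  · calc (w + 1) / (4 * κ) * ((i + s : ℕ) : ℝ) ≤ (w + 1) / (4 * κ) * (2 * κ * d) := by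
          gcongr
          · exact div_nonneg (by linarith) (by positivity)
          · push_cast; nlinarith
      _ = (w + 1) * d / 2 := by field_simp; ring
      _ ≤ ((i + x : ℕ) : ℝ) := by push_cast; nlinarith
  · exact_mod_cast (by nlinarith : (d : ℝ) ≤ x)

lemma satisfiesCond_of_infinite (a : ℕ → Fq) {ξ : K Fq} (hξ : ∀ n : ℕ, ξ.coeff (n : ℤ) = a n)
    (hξneg : ∀ m : ℤ, m < 0 → ξ.coeff m = 0) {κ n₀ : ℕ} (hκ : 0 < κ)
    (hcomp : ∀ n : ℕ, n₀ ≤ n → complexity a n ≤ ((κ * n : ℕ) : ℕ∞)) {w : ℝ}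
    (hw : 4 * κ ≤ w + 1)
    (hinf : {P : Fq[X][X] | P.natDegree ≤ 1 ∧ 0 < kabs Fq (evalK Fq P ξ) ∧
      kabs Fq (evalK Fq P ξ) ≤ Hpoly Fq P ^ (-w)}.Infinite) :
    SatisfiesCond a ((w + 1) / (4 * κ)) := by
  have hξ1 := kabs_le_one_of_coeff_neg hξneg
  have hw0 : 0 < w := by
    have : (1 : ℝ) ≤ κ := by exact_mod_cast hκ
    linarith
  refine satisfiesCond_of_forall_exists_length_ge a _ fun M => ?_
  obtain ⟨P, hP, hle, hdeg⟩ := exists_natDegree_coeff_one_gt hξ1 hw0 hinf (max n₀ M)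
  obtain ⟨U, V, w', hV, hw', hpre, hρ, hlen⟩ := exists_prefix_of_kabs_evalK_le a hξ hκ hw hP
    (by omega) (natDegree_coeff_zero_le hξ1 hw0 hP hle) (hcomp _ (by omega)) hle
  exact ⟨U, V, w', hV, hw', hpre, hρ, by omega⟩

end MainStep

theorem stmt19_general (Fq : Type) [Field Fq] [Fintype Fq]
    (a : ℕ → Fq)
    (ξ : K Fq) (hξcoeff : ∀ n : ℕ, ξ.coeff (n : ℤ) = a n)
    (hξneg : ∀ m : ℤ, m < 0 → ξ.coeff m = 0)
    (κ n₀ : ℕ) (hκ : 2 ≤ κ)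
    (hcomp : ∀ n : ℕ, n₀ ≤ n → complexity a n ≤ ((κ * n : ℕ) : ℕ∞))
    (hdio : dioExp a ≠ ⊤) :
    wExp Fq 1 ξ ≤ ((8 * (κ + 1 : ℝ) ^ 2 * (2 * κ + 1) : ℝ) : EReal) * dioExp a - 1 := by
  have hdio1 : ((1 : ℝ) : EReal) ≤ dioExp a := le_dioExp (satisfiesCond_one a)
  obtain ⟨r, hr⟩ : ∃ r : ℝ, dioExp a = r :=
    ⟨_, (EReal.coe_toReal hdio (ne_bot_of_le_ne_bot (EReal.coe_ne_bot 1) hdio1)).symm⟩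
  rw [hr, EReal.coe_le_coe_iff] at hdio1
  rw [hr, ← EReal.coe_mul, ← EReal.coe_one, ← EReal.coe_sub]
  refine sSup_le ?_
  rintro _ ⟨w, rfl, hinf⟩
  rw [EReal.coe_le_coe_iff]
  have hκr : (2 : ℝ) ≤ κ := by exact_mod_cast hκ
  have hw : w + 1 ≤ 4 * κ * r := by
    by_cases hw : 4 * κ ≤ w + 1
    · have hρ := le_dioExp (satisfiesCond_of_infinite a hξcoeff hξneg (by omega) hcomp hw hinf)
      rw [hr, EReal.coe_le_coe_iff, div_le_iff₀ (by positivity)] at hρ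
      linarith
    · nlinarith
  have hC : 4 * (κ : ℝ) ≤ 8 * (κ + 1) ^ 2 * (2 * κ + 1) := by nlinarith
  nlinarith [mul_le_mul_of_nonneg_right hC (by linarith : (0 : ℝ) ≤ r)]

theorem stmt19 (Fq : Type) [Field Fq] [Fintype Fq]
    (a : ℕ → Fq) (hnup : ¬ UltimatelyPeriodic a)
    (ξ : K Fq) (hξcoeff : ∀ n : ℕ, ξ.coeff (n : ℤ) = a n)
    (hξneg : ∀ m : ℤ, m < 0 → ξ.coeff m = 0)
    (κ n₀ : ℕ) (hκ : 2 ≤ κ) (hn₀ : 1 ≤ n₀)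
    (hcomp : ∀ n : ℕ, n₀ ≤ n → complexity a n ≤ ((κ * n : ℕ) : ℕ∞))
    (hdio : dioExp a ≠ ⊤) :
    wExp Fq 1 ξ ≤ ((8 * (κ + 1 : ℝ) ^ 2 * (2 * κ + 1) : ℝ) : EReal) * dioExp a - 1 :=
  stmt19_general Fq a ξ hξcoeff hξneg κ n₀ hκ hcomp hdio

end Ooto
end
end
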